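/- Let R be a root system in an ℓ-dimensional real inner product space V with ‖α‖² = 2 for all α ∈ R, and suppose R is irreducible in the sense that the only subspaces of V invariant under all the reflections s_α (α ∈ R) are {0} and V. Then for every α ∈ R, the number of β ∈ R with α − β ∈ R equals 2|R|/ℓ − 4; equivalently, the graph Γ(R,1) is regular of degree 2|R|/ℓ − 4 (which equals 2(h−2) where h = |R|/ℓ is the Coxeter number). -/

import Mathlib

open scoped RealInnerProductSpace

variable {V : Type*} [NormedAddCommGroup V] [InnerProductSpace ℝ V] [FiniteDimensional ℝ V]
set_option linter.unusedSectionVars false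


noncomputable def rsT (R : Finset V) : V →ₗ[ℝ] V where
  toFun x := ∑ β ∈ R, ⟪x, β⟫ • β
  map_add' x y := by simp [inner_add_left, add_smul, Finset.sum_add_distrib]
  map_smul' c x := by simp [inner_smul_left, smul_smul, Finset.smul_sum]

lemma rsT_apply (R : Finset V) (x : V) : rsT R x = ∑ β ∈ R, ⟪x, β⟫ • β := rfl

lemma rsT_symm (R : Finset V) : (rsT R).IsSymmetric := by
  intro x y
  simp only [rsT_apply, sum_inner, inner_sum, real_inner_smul_left, real_inner_smul_right]
  exact Finset.sum_congr rfl fun β _ => by rw [real_inner_comm y β]; ring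

section
variable (R : Finset V)

-- reflection as linear map
noncomputable def rsS (γ : V) : V →ₗ[ℝ] V where
  toFun x := x - ⟪x, γ⟫ • γ
  map_add' x y := by simp [inner_add_left, add_smul]; abel
  map_smul' c x := by simp [inner_smul_left, smul_smul, smul_sub]

lemma rsS_apply (γ x : V) : rsS γ x = x - ⟪x, γ⟫ • γ := rfl

lemma rsS_selfadj (γ x y : V) : ⟪rsS γ x, y⟫ = ⟪x, rsS γ y⟫ := by
  simp [rsS_apply, inner_sub_left, inner_sub_right, real_inner_smul_left,
    real_inner_smul_right, real_inner_comm γ y]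
  ring

lemma rsS_invol (γ : V) (hγ : ⟪γ, γ⟫ = (2:ℝ)) (x : V) : rsS γ (rsS γ x) = x := by
  simp [rsS_apply, inner_sub_left, real_inner_smul_left, hγ, smul_smul, sub_smul]
  rw [← real_inner_self_eq_norm_sq, hγ]
  module

end

lemma rsT_comm (R : Finset V) (γ : V) (hγγ : ⟪γ, γ⟫ = (2:ℝ))
    (hmem : ∀ β ∈ R, rsS γ β ∈ R) (x : V) :
    rsT R (rsS γ x) = rsS γ (rsT R x) := by
  calc rsT R (rsS γ x) = ∑ β ∈ R, ⟪x, rsS γ β⟫ • β := by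
        rw [rsT_apply]; exact Finset.sum_congr rfl fun β _ => by rw [rsS_selfadj]
    _ = ∑ β ∈ R, ⟪x, β⟫ • rsS γ β := by
        refine Finset.sum_nbij' (i := fun β => rsS γ β) (j := fun β => rsS γ β)
          hmem hmem (fun a _ => rsS_invol γ hγγ a) (fun a _ => rsS_invol γ hγγ a)
          (fun a _ => by rw [rsS_invol γ hγγ a])
    _ = rsS γ (rsT R x) := by rw [rsT_apply, map_sum]; simp


/-- `R` is a root system in the real inner product space `V`. -/
def IsRootSystem (R : Finset V) : Prop :=
  Submodule.span ℝ (R : Set V) = ⊤ ∧ (0 : V) ∉ R ∧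
  (∀ α ∈ R, -α ∈ R) ∧
  (∀ α ∈ R, ∀ t : ℝ, t • α ∈ R → t = 1 ∨ t = -1) ∧
  (∀ α ∈ R, ∀ β ∈ R, β - (2 * ⟪β, α⟫ / ⟪α, α⟫) • α ∈ R) ∧
  (∀ α ∈ R, ∀ β ∈ R, ∃ n : ℤ, 2 * ⟪β, α⟫ / ⟪α, α⟫ = (n : ℝ))

/-- For an irreducible simply-laced root system `R` of rank `ℓ`, every vertex `α` of
`Γ(R,1)` has degree `2|R|/ℓ - 4 = 2(h-2)`: the number of roots `β` with `α - β ∈ R`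
is `2|R|/ℓ - 4`. -/
theorem gamma_one_regular (R : Finset V) (hR : IsRootSystem R)
    (hnorm : ∀ α ∈ R, ‖α‖ ^ 2 = 2)
    (hirr : ∀ W : Submodule ℝ V,
      (∀ α ∈ R, ∀ x ∈ W, x - (2 * ⟪x, α⟫ / ⟪α, α⟫) • α ∈ W) → W = ⊥ ∨ W = ⊤) :
    ∀ α ∈ R, (({β : V | β ∈ R ∧ α - β ∈ R}).ncard : ℝ)
      = 2 * (R.card : ℝ) / (Module.finrank ℝ V : ℝ) - 4 := by
  classical
  obtain ⟨hspan, h0, hneg, hmul, hrefl, hint⟩ := hR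
  have hself : ∀ β ∈ R, ⟪β, β⟫ = (2:ℝ) := fun β hβ => by
    rw [real_inner_self_eq_norm_sq]; exact hnorm β hβ
  have hrefl' : ∀ γ ∈ R, ∀ β ∈ R, rsS γ β ∈ R := by
    intro γ hγ β hβ
    have h := hrefl γ hγ β hβ
    rw [hself γ hγ, mul_div_cancel_left₀ _ (two_ne_zero)] at h
    exact h
  have hint' : ∀ γ ∈ R, ∀ β ∈ R, ∃ n : ℤ, ⟪β, γ⟫ = (n:ℝ) := by
    intro γ hγ β hβ
    obtain ⟨n, hn⟩ := hint γ hγ β hβ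
    rw [hself γ hγ, mul_div_cancel_left₀ _ (two_ne_zero)] at hn
    exact ⟨n, hn⟩
  intro α hα
  have hne : α ≠ 0 := fun h => h0 (h ▸ hα)
  haveI : Nontrivial V := nontrivial_of_ne α 0 hne
  obtain ⟨μ, hμ⟩ : ∃ μ : ℝ, Module.End.HasEigenvalue (rsT R) μ :=
    ⟨_, (rsT_symm R).hasEigenvalue_iSup_of_finiteDimensional⟩
  have hinv : ∀ γ ∈ R, ∀ x ∈ Module.End.eigenspace (rsT R) μ,
      x - (2 * ⟪x, γ⟫ / ⟪γ, γ⟫) • γ ∈ Module.End.eigenspace (rsT R) μ := by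
    intro γ hγ x hx
    rw [hself γ hγ, mul_div_cancel_left₀ _ (two_ne_zero)]
    rw [Module.End.mem_eigenspace_iff] at hx ⊢
    show rsT R (rsS γ x) = μ • rsS γ x
    rw [rsT_comm R γ (hself γ hγ) (hrefl' γ hγ), hx, map_smul]
  rcases hirr _ hinv with hbot | htop
  · exact absurd hbot hμ
  have hTx : ∀ x : V, rsT R x = μ • x := fun x =>
    Module.End.mem_eigenspace_iff.mp (htop ▸ Submodule.mem_top)
  -- trace computation
  set ℓ : ℕ := Module.finrank ℝ V with hℓ
  have htrace : μ * (ℓ : ℝ) = 2 * R.card := by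
    set b := stdOrthonormalBasis ℝ V
    have h1 : ∑ i, ⟪rsT R (b i), b i⟫ = μ * (ℓ : ℝ) := by
      have : ∀ i, ⟪rsT R (b i), b i⟫ = μ := by
        intro i
        rw [hTx, real_inner_smul_left, real_inner_self_eq_norm_sq, b.orthonormal.1 i]
        norm_num
      simp [this, Finset.sum_const, mul_comm]
      exact Or.inl hℓ.symm
    have h2 : ∑ i, ⟪rsT R (b i), b i⟫ = 2 * R.card := by
      have : ∀ i, ⟪rsT R (b i), b i⟫ = ∑ β ∈ R, ⟪β, b i⟫ * ⟪b i, β⟫ := by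
        intro i
        rw [rsT_apply, sum_inner]
        exact Finset.sum_congr rfl fun β _ => by
          rw [real_inner_smul_left, real_inner_comm (b i) β]
      simp only [this]
      rw [Finset.sum_comm]
      have : ∀ β ∈ R, ∑ i, ⟪β, b i⟫ * ⟪b i, β⟫ = (2:ℝ) := fun β hβ => by
        rw [b.sum_inner_mul_inner]; exact hself β hβ
      rw [Finset.sum_congr rfl this, Finset.sum_const, nsmul_eq_mul, mul_comm]
    linarith
  -- adjacency set as a filter
  have hsetfin : {β : V | β ∈ R ∧ α - β ∈ R} = ↑(R.filter fun β => α - β ∈ R) := by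
    ext β; simp
  rw [hsetfin, Set.ncard_coe_finset]
  have hadj : R.filter (fun β => α - β ∈ R) = R.filter (fun β => ⟪α, β⟫ = 1) := by
    apply Finset.filter_congr
    intro β hβ
    constructor
    · intro h
      have h2 := hnorm _ h
      rw [norm_sub_sq_real, hnorm α hα, hnorm β hβ] at h2
      linarith
    · intro h
      have hr := hrefl' α hα β hβ
      have h' : ⟪β, α⟫ = (1:ℝ) := by rw [real_inner_comm]; exact h
      rw [rsS_apply, h', one_smul] at hr
      have := hneg _ hr
      rwa [neg_sub] at this
  rw [hadj]
  -- P and N have equal cardinality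
  have hPN : (R.filter fun β => ⟪α, β⟫ = 1).card
      = (R.filter fun β => ⟪α, β⟫ = (-1:ℝ)).card := by
    apply Finset.card_nbij' (i := fun β => -β) (j := fun β => -β)
    · intro β hβ
      simp only [Finset.mem_coe, Finset.mem_filter] at hβ ⊢
      exact ⟨hneg β hβ.1, by rw [inner_neg_right, hβ.2]⟩
    · intro β hβ
      simp only [Finset.mem_coe, Finset.mem_filter] at hβ ⊢
      refine ⟨hneg β hβ.1, by rw [inner_neg_right, hβ.2]; norm_num⟩
    · intro a _; simp
    · intro a _; simp
  -- sum of squared inner products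
  have hS : ∑ β ∈ R, ⟪α, β⟫^2 = μ * 2 := by
    have : ∑ β ∈ R, ⟪α, β⟫^2 = ⟪rsT R α, α⟫ := by
      rw [rsT_apply, sum_inner]
      exact Finset.sum_congr rfl fun β _ => by
        rw [real_inner_smul_left, real_inner_comm β α]; ring
    rw [this, hTx, real_inner_smul_left, hself α hα]
  have hαneg : α ≠ -α := by
    intro h
    apply hne
    have : (2:ℝ) • α = 0 := by rw [two_smul]; nth_rewrite 2 [h]; simp
    simpa using smul_eq_zero.mp this |>.resolve_left (by norm_num)
  have key : ∀ β ∈ R, ⟪α, β⟫^2 = (if β = α then (4:ℝ) else 0) + (if β = -α then 4 else 0)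
      + (if ⟪α, β⟫ = (1:ℝ) then 1 else 0) + (if ⟪α, β⟫ = (-1:ℝ) then 1 else 0) := by
    intro β hβ
    by_cases h1 : β = α
    · rw [h1, hself α hα, if_pos rfl, if_neg hαneg,
        if_neg (by norm_num : ¬(2:ℝ) = 1), if_neg (by norm_num : ¬(2:ℝ) = -1)]
      norm_num
    by_cases h2 : β = -α
    · rw [h2, inner_neg_right, hself α hα, if_neg (fun h => hαneg h.symm), if_pos rfl,
        if_neg (by norm_num : ¬-(2:ℝ) = 1), if_neg (by norm_num : ¬-(2:ℝ) = -1)]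
      norm_num
    · obtain ⟨n, hn⟩ := hint' α hα β hβ
      rw [real_inner_comm α β] at hn
      have hcs : ⟪α, β⟫ * ⟪α, β⟫ ≤ 4 := by
        have := real_inner_mul_inner_self_le α β
        rw [hself α hα, hself β hβ] at this
        linarith
      have hn2 : ¬ (⟪α, β⟫ = (2:ℝ)) := by
        intro hc
        apply h1
        have hz : ‖α - β‖^2 = 0 := by
          rw [norm_sub_sq_real, hnorm α hα, hnorm β hβ, hc]; ring
        have h' := norm_eq_zero.mp (pow_eq_zero_iff (n := 2) (by norm_num) |>.mp hz)
        exact (sub_eq_zero.mp h').symm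
      have hnm2 : ¬ (⟪α, β⟫ = (-2:ℝ)) := by
        intro hc
        apply h2
        have hz : ‖α + β‖^2 = 0 := by
          rw [norm_add_sq_real, hnorm α hα, hnorm β hβ, hc]; ring
        have := norm_eq_zero.mp (pow_eq_zero_iff (n := 2) (by norm_num) |>.mp hz)
        have : β = -α := by rw [eq_neg_iff_add_eq_zero, add_comm]; exact this
        exact this
      have hb : n^2 ≤ 4 := by
        have : ((n:ℝ))^2 ≤ 4 := by rw [← hn]; nlinarith [hcs]
        exact_mod_cast this
      have hbn1 : -2 ≤ n := by nlinarith
      have hbn2 : n ≤ 2 := by nlinarith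
      interval_cases n
      · exact absurd (by exact_mod_cast hn) hnm2
      · rw [hn]; push_cast; simp [h1, h2]; norm_num
      · rw [hn]; push_cast; simp [h1, h2]
      · rw [hn]; push_cast; simp [h1, h2]; norm_num
      · exact absurd (by exact_mod_cast hn) hn2
  have hsplit : ∑ β ∈ R, ⟪α, β⟫^2
      = 8 + (((R.filter fun β => ⟪α, β⟫ = (1:ℝ)).card : ℝ)
        + ((R.filter fun β => ⟪α, β⟫ = (-1:ℝ)).card : ℝ)) := by
    rw [Finset.sum_congr rfl key]
    rw [Finset.sum_add_distrib, Finset.sum_add_distrib, Finset.sum_add_distrib]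
    rw [Finset.sum_ite_eq' R α (fun _ => (4:ℝ)), Finset.sum_ite_eq' R (-α) (fun _ => (4:ℝ))]
    rw [Finset.sum_boole, Finset.sum_boole]
    simp [hα, hneg α hα]
    ring
  have hl : (0:ℝ) < (ℓ : ℝ) := by exact_mod_cast Module.finrank_pos
  have hlne : (ℓ:ℝ) ≠ 0 := ne_of_gt hl
  have hμval : 2 * (R.card : ℝ) / (ℓ : ℝ) = μ := by
    field_simp
    linarith [htrace]
  rw [hμval]
  rw [hS] at hsplit
  have hPN' : ((R.filter fun β => ⟪α, β⟫ = (1:ℝ)).card : ℝ)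
      = ((R.filter fun β => ⟪α, β⟫ = (-1:ℝ)).card : ℝ) := by exact_mod_cast hPN
  linarith [hsplit, hPN']
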